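/- arXiv:1910.11145 — 4 statements merged into one kernel-verified Lean document; each statement's English description precedes it below -/
import Mathlib

section
/- Let G be a finite nilpotent group. Then maol(G) = ∏_p maol(G_p), where the product ranges over the primes p dividing |G| and G_p denotes the (unique) Sylow p-subgroup of G. -/
/-- `maol G` is the maximum length of an orbit of the natural action of `Aut(G)` on `G`. -/
noncomputable def maol (G : Type*) [Group G] : ℕ :=
  ⨆ g : G, Nat.card (MulAction.orbit (MulAut G) g)

lemma maol_le {G : Type*} [Group G] [Finite G] (g : G) :
    Nat.card (MulAction.orbit (MulAut G) g) ≤ maol G := by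
  rw [maol]
  exact le_ciSup (Set.Finite.bddAbove (Set.finite_range
    (fun g : G => Nat.card (MulAction.orbit (MulAut G) g)))) g

lemma exists_maol (G : Type*) [Group G] [Finite G] :
    ∃ g : G, maol G = Nat.card (MulAction.orbit (MulAut G) g) := by
  obtain ⟨g, hg⟩ := Finite.exists_max (fun g : G => Nat.card (MulAction.orbit (MulAut G) g))
  exact ⟨g, le_antisymm (ciSup_le hg) (maol_le g)⟩

lemma maol_congr {G H : Type*} [Group G] [Group H] (e : G ≃* H) : maol G = maol H := by
  have key : ∀ g : G, Nat.card (MulAction.orbit (MulAut G) g)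
      = Nat.card (MulAction.orbit (MulAut H) (e g)) := by
    intro g
    apply Nat.card_eq_of_bijective (fun x => ⟨e x.1, by
      obtain ⟨x, φ, rfl⟩ := x
      exact ⟨(e.symm.trans (φ.trans e) : MulAut H), by
        simp [MulAut.smul_def]⟩⟩)
    constructor
    · intro a b h
      exact Subtype.ext (e.injective (congrArg Subtype.val h))
    · rintro ⟨y, ψ, rfl⟩
      refine ⟨⟨e.symm (ψ • e g), ⟨((e.trans ψ).trans e.symm : MulAut G), ?_⟩⟩, ?_⟩
      · simp [MulAut.smul_def]
      · exact Subtype.ext (e.apply_symm_apply _)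
  unfold maol
  rw [iSup, iSup,
    show (fun g : G => Nat.card (MulAction.orbit (MulAut G) g))
      = (fun h : H => Nat.card (MulAction.orbit (MulAut H) h)) ∘ ⇑e from funext key,
    Function.Surjective.range_comp e.surjective]

section Pi

variable {ι : Type*} [Fintype ι] [DecidableEq ι] (G : ι → Type*) [∀ i, Group (G i)]
  [∀ i, Finite (G i)]

lemma key_one (hcop : Pairwise fun i j => Nat.Coprime (Nat.card (G i)) (Nat.card (G j)))
    (φ : MulAut (∀ i, G i)) (S : Finset ι) (x : ∀ i, G i) (hx : ∀ j ∉ S, x j = 1) :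
    ∀ j ∉ S, φ x j = 1 := by
  set N := ∏ i ∈ S, Nat.card (G i) with hN
  have hxN : x ^ N = 1 := by
    funext j
    by_cases h : j ∈ S
    · have : orderOf (x j) ∣ N :=
        dvd_trans (orderOf_dvd_natCard _) (Finset.dvd_prod_of_mem _ h)
      simpa using orderOf_dvd_iff_pow_eq_one.mp this
    · simp [hx j h]
  intro j hj
  have h1 : (φ x) ^ N = 1 := by rw [← map_pow, hxN, map_one]
  have h2 : (φ x j) ^ N = 1 := by simpa using congrFun h1 j
  have hd1 : orderOf (φ x j) ∣ N := orderOf_dvd_of_pow_eq_one h2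
  have hd2 : orderOf (φ x j) ∣ Nat.card (G j) := orderOf_dvd_natCard _
  have hcopN : Nat.Coprime N (Nat.card (G j)) :=
    Nat.Coprime.prod_left (fun i hi => hcop (fun h => hj (h ▸ hi)))
  have h3 : orderOf (φ x j) ∣ Nat.gcd N (Nat.card (G j)) := Nat.dvd_gcd hd1 hd2
  rw [hcopN] at h3
  exact orderOf_eq_one_iff.mp (Nat.dvd_one.mp h3)

lemma exists_comp (hcop : Pairwise fun i j => Nat.Coprime (Nat.card (G i)) (Nat.card (G j)))
    (φ : MulAut (∀ i, G i)) (i : ι) :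
    ∃ ψ : MulAut (G i), ∀ g : ∀ i, G i, (φ g) i = ψ (g i) := by
  set f : G i →* G i :=
    (Pi.evalMonoidHom G i).comp
      ((φ : (∀ i, G i) →* (∀ i, G i)).comp (MonoidHom.mulSingle G i)) with hf
  have hone : ∀ (a : G i) (j : ι), j ≠ i → φ (Pi.mulSingle i a) j = 1 := by
    intro a j hj
    refine key_one G hcop φ {i} (Pi.mulSingle i a) (fun k hk => ?_) j (by simpa using hj)
    exact Pi.mulSingle_eq_of_ne (by simpa using hk) a
  have hinj : Function.Injective f := by
    rw [injective_iff_map_eq_one]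
    intro a ha
    have h1 : φ (Pi.mulSingle i a) = 1 := by
      funext j
      by_cases h : j = i
      · subst h; exact ha
      · exact hone a j h
    have h2 : Pi.mulSingle i a = 1 := φ.injective (by simpa using h1)
    simpa using congrFun h2 i
  have hbij := Finite.injective_iff_bijective.mp hinj
  refine ⟨MulEquiv.ofBijective f hbij, fun g => ?_⟩
  have hdec : g = Pi.mulSingle i (g i) * Function.update g i 1 := by
    funext j
    by_cases h : j = i
    · subst h; simp
    · simp [Function.update_of_ne h, Pi.mulSingle_eq_of_ne h]
  have hupd : (φ (Function.update g i 1)) i = 1 := by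
    refine key_one G hcop φ (Finset.univ.erase i) _ (fun j hj => ?_) i (by simp)
    have hji : j = i := by simpa using hj
    subst hji
    simp
  calc (φ g) i = (φ (Pi.mulSingle i (g i)) * φ (Function.update g i 1)) i := by
        rw [← map_mul, ← hdec]
    _ = (φ (Pi.mulSingle i (g i))) i * (φ (Function.update g i 1)) i := rfl
    _ = (φ (Pi.mulSingle i (g i))) i := by rw [hupd, mul_one]
    _ = (MulEquiv.ofBijective f hbij) (g i) := rfl

lemma maol_pi (hcop : Pairwise fun i j => Nat.Coprime (Nat.card (G i)) (Nat.card (G j))) :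
    maol (∀ i, G i) = ∏ i, maol (G i) := by
  apply le_antisymm
  · obtain ⟨g, hg⟩ := exists_maol (∀ i, G i)
    rw [hg]
    have hmem : ∀ x : MulAction.orbit (MulAut (∀ i, G i)) g, ∀ i,
        (x : ∀ i, G i) i ∈ MulAction.orbit (MulAut (G i)) (g i) := by
      rintro ⟨x, φ, rfl⟩ i
      obtain ⟨ψ, hψ⟩ := exists_comp G hcop φ i
      exact ⟨ψ, (hψ g).symm⟩
    calc Nat.card (MulAction.orbit (MulAut (∀ i, G i)) g)
        ≤ Nat.card (∀ i, MulAction.orbit (MulAut (G i)) (g i)) := by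
          refine Nat.card_le_card_of_injective
            (fun x i => ⟨(x : ∀ i, G i) i, hmem x i⟩) ?_
          intro x y h
          apply Subtype.ext
          funext i
          exact congrArg Subtype.val (congrFun h i)
      _ = ∏ i, Nat.card (MulAction.orbit (MulAut (G i)) (g i)) := Nat.card_pi
      _ ≤ ∏ i, maol (G i) := Finset.prod_le_prod' (fun i _ => maol_le (g i))
  · choose g hgm using fun i => exists_maol (G i)
    have hmem : ∀ x : ∀ i, MulAction.orbit (MulAut (G i)) (g i),
        (fun i => ((x i : G i))) ∈ MulAction.orbit (MulAut (∀ i, G i)) g := by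
      intro x
      choose ψ hψ using fun i => (x i).2
      refine ⟨(MulEquiv.piCongrRight ψ : MulAut (∀ i, G i)), funext fun i => ?_⟩
      exact hψ i
    calc ∏ i, maol (G i) = ∏ i, Nat.card (MulAction.orbit (MulAut (G i)) (g i)) :=
          Finset.prod_congr rfl (fun i _ => hgm i)
      _ = Nat.card (∀ i, MulAction.orbit (MulAut (G i)) (g i)) := Nat.card_pi.symm
      _ ≤ Nat.card (MulAction.orbit (MulAut (∀ i, G i)) g) := by
          refine Nat.card_le_card_of_injective
            (fun x => ⟨fun i => (x i : G i), hmem x⟩) ?_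
          intro x y h
          funext i
          exact Subtype.ext (congrFun (congrArg Subtype.val h) i)
      _ ≤ maol (∀ i, G i) := maol_le g

end Pi

theorem stmt_6 (G : Type*) [Group G] [Finite G] (hnil : Group.IsNilpotent G)
    (P : ∀ p : ℕ, Sylow p G) :
    maol G = ∏ p ∈ (Nat.card G).primeFactors, maol (P p : Subgroup G) := by
  classical
  have hnorm : ∀ {p : ℕ} [Fact p.Prime] (Q : Sylow p G), (Q : Subgroup G).Normal := by
    intro p hp Q
    exact ((isNilpotent_of_finite_tfae (G := G)).out 0 3 rfl rfl).mp hnil p hp Q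
  set ps := (Nat.card G).primeFactors with hps
  haveI hFact : ∀ p : ps, Fact (p : ℕ).Prime :=
    fun p => ⟨Nat.prime_of_mem_primeFactors p.2⟩
  let e1 : (∀ p : ps, ∀ Q : Sylow p G, Q) ≃* G := Sylow.directProductOfNormal hnorm
  have e2 : ∀ p : ps, (∀ Q : Sylow (p : ℕ) G, Q) ≃* (P (p : ℕ) : Subgroup G) := by
    intro p
    haveI : Unique (Sylow (p : ℕ) G) := Sylow.unique_of_normal (P p) (hnorm _)
    refine (MulEquiv.piUnique (fun Q : Sylow (p : ℕ) G => Q)).trans ?_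
    exact MulEquiv.subgroupCongr
      (congrArg (fun Q : Sylow (p : ℕ) G => (Q : Subgroup G))
        (Subsingleton.elim _ _))
  have e : G ≃* ∀ p : ps, (P (p : ℕ) : Subgroup G) :=
    e1.symm.trans (MulEquiv.piCongrRight e2)
  rw [maol_congr e, maol_pi, Finset.prod_coe_sort ps (fun p => maol (P p : Subgroup G))]
  intro p q hpq
  have hp := (hFact p).out
  have hq := (hFact q).out
  rw [Sylow.card_eq_multiplicity, Sylow.card_eq_multiplicity]
  exact Nat.Coprime.pow _ _ ((Nat.coprime_primes hp hq).mpr (fun h => hpq (Subtype.ext h)))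
end

section
/- Let G be a finite abelian group with maol(G) = 3. Then G is isomorphic to the Klein four group (Z/2Z)². -/
open MulAction

theorem Set.ncard_le_two_of_subset_pair {α : Type*} {s : Set α} {a b : α} (h : s ⊆ {a, b}) :
    s.ncard ≤ 2 :=
  (Set.ncard_le_ncard h).trans <| (Set.ncard_insert_le a {b}).trans_eq <| by
    rw [Set.ncard_singleton]

theorem exists_linearEquiv_apply_eq_of_ne_zero (K : Type*) {V : Type*} [DivisionRing K]
    [AddCommGroup V] [Module K V] {v u : V} (hv : v ≠ 0) (hu : u ≠ 0) :
    ∃ e : V ≃ₗ[K] V, e v = u := by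
  obtain ⟨e, he⟩ := Submodule.exists_linearEquiv_restrict_eq
    ((LinearEquiv.toSpanNonzeroSingleton K V v hv).symm ≪≫ₗ
      LinearEquiv.toSpanNonzeroSingleton K V u hu)
  refine ⟨e, ?_⟩
  have := he (LinearEquiv.toSpanNonzeroSingleton K V v hv 1)
  rw [LinearEquiv.trans_apply, LinearEquiv.symm_apply_apply,
    LinearEquiv.toSpanNonzeroSingleton_one, LinearEquiv.toSpanNonzeroSingleton_one] at this
  exact this.symm

section Group

variable {G : Type*} [Group G]

theorem orbit_mulAut_one : orbit (MulAut G) (1 : G) = {1} := by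
  ext x
  simp [mem_orbit_iff, eq_comm]

variable [Finite G]

theorem ncard_orbit_le_maol (g : G) : (orbit (MulAut G) g).ncard ≤ maol G := by
  rw [← Nat.card_coe_set_eq]
  exact le_ciSup (f := fun g : G ↦ Nat.card (orbit (MulAut G) g)) (Set.finite_range _).bddAbove g

theorem exists_ncard_orbit_eq_maol : ∃ g : G, (orbit (MulAut G) g).ncard = maol G := by
  obtain ⟨g, hg⟩ := exists_eq_ciSup_of_finite (f := fun g : G ↦ Nat.card (orbit (MulAut G) g))
  exact ⟨g, by rw [← Nat.card_coe_set_eq, hg, maol]⟩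

end Group

section CommGroup

variable {G : Type*} [CommGroup G]

theorem inv_mem_orbit_mulAut {g w : G} (hw : w ∈ orbit (MulAut G) g) :
    w⁻¹ ∈ orbit (MulAut G) g := by
  obtain ⟨φ, rfl⟩ := hw
  exact ⟨φ.trans (MulEquiv.inv G), rfl⟩

abbrev zmodTwoModuleOfMulSelfEqOne (hexp : ∀ x : G, x * x = 1) :
    Module (ZMod 2) (Additive G) :=
  AddCommGroup.zmodModule fun v ↦ by rw [two_nsmul]; exact hexp v.toMul

theorem orbit_mulAut_eq_compl_one (hexp : ∀ x : G, x * x = 1) {w : G} (hw : w ≠ 1) :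
    orbit (MulAut G) w = {1}ᶜ := by
  let := zmodTwoModuleOfMulSelfEqOne hexp
  refine subset_antisymm ?_ fun t ht ↦ ?_
  · rintro _ ⟨φ, rfl⟩
    exact (MulEquiv.map_ne_one_iff φ).mpr hw
  · obtain ⟨e, he⟩ := exists_linearEquiv_apply_eq_of_ne_zero (ZMod 2)
      (ofMul_eq_zero.not.mpr hw) (ofMul_eq_zero.not.mpr ht)
    exact ⟨MulEquiv.toAdditive.symm e.toAddEquiv, he⟩

theorem nonempty_mulEquiv_multiplicative_of_card_eq (hexp : ∀ x : G, x * x = 1) (V : Type*)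
    [AddCommGroup V] [Module (ZMod 2) V] [Finite V] (hcard : Nat.card G = Nat.card V) :
    Nonempty (G ≃* Multiplicative V) := by
  let := zmodTwoModuleOfMulSelfEqOne hexp
  have : Finite G := Nat.finite_of_card_ne_zero (hcard ▸ Nat.card_pos.ne')
  have : Module.Finite (ZMod 2) (Additive G) := Module.Finite.of_finite
  have hrank : Module.finrank (ZMod 2) (Additive G) = Module.finrank (ZMod 2) V := by
    have hG := Module.natCard_eq_pow_finrank (K := ZMod 2) (V := Additive G)
    have hV := Module.natCard_eq_pow_finrank (K := ZMod 2) (V := V)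
    rw [Nat.card_zmod] at hG hV
    exact Nat.pow_right_injective le_rfl (hG.symm.trans (hcard.trans hV))
  exact ⟨AddEquiv.toMultiplicativeRight (LinearEquiv.ofFinrankEq _ _ hrank).toAddEquiv⟩

variable [Finite G]

theorem apply_eq_or_eq_inv_of_mul_self_ne_one (hG : ∀ g : G, (orbit (MulAut G) g).ncard ≤ 3)
    {u : G} (hu : u * u ≠ 1) (φ : MulAut G) : φ u = u ∨ φ u = u⁻¹ := by
  by_contra! ⟨h1, h2⟩
  have hpair {v : G} (hv : v * v ≠ 1) : ({v, v⁻¹} : Set G).ncard = 2 :=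
    Set.ncard_pair fun h ↦ hv (mul_eq_one_iff_eq_inv.mpr h)
  have hφu : φ u * φ u ≠ 1 := by rwa [← map_mul, MulEquiv.map_ne_one_iff]
  have hdisj : Disjoint ({u, u⁻¹} : Set G) {φ u, (φ u)⁻¹} := by
    simp only [Set.disjoint_insert_left, Set.disjoint_singleton_left, Set.mem_insert_iff,
      Set.mem_singleton_iff, inv_inj, not_or]
    exact ⟨⟨Ne.symm h1, fun h ↦ h2 (inv_eq_iff_eq_inv.mpr h).symm⟩, Ne.symm h2, Ne.symm h1⟩
  have hsub : {u, u⁻¹} ∪ {φ u, (φ u)⁻¹} ⊆ orbit (MulAut G) u := by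
    simp only [Set.union_subset_iff, Set.insert_subset_iff, Set.singleton_subset_iff]
    exact ⟨⟨mem_orbit_self u, inv_mem_orbit_mulAut (mem_orbit_self u)⟩,
      mem_orbit u φ, inv_mem_orbit_mulAut (mem_orbit u φ)⟩
  have := Set.ncard_le_ncard hsub
  rw [Set.ncard_union_eq hdisj, hpair hu, hpair hφu] at this
  linarith [hG u]

theorem ncard_orbit_le_two_of_mul_self_ne_one (hG : ∀ g : G, (orbit (MulAut G) g).ncard ≤ 3)
    {u : G} (hu : u * u ≠ 1) : (orbit (MulAut G) u).ncard ≤ 2 :=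
  Set.ncard_le_two_of_subset_pair <| by
    rintro _ ⟨φ, rfl⟩
    exact apply_eq_or_eq_inv_of_mul_self_ne_one hG hu φ

theorem apply_eq_or_eq_mul_self_mul (hG : ∀ g : G, (orbit (MulAut G) g).ncard ≤ 3)
    {w x : G} (hw : w * w = 1) (hx : x * x ≠ 1) (σ : MulAut G) :
    σ w = w ∨ σ w = x * x * w := by
  have hxw : x * w * (x * w) ≠ 1 := by rwa [mul_mul_mul_comm, hw, mul_one]
  have hσw : σ w * σ w = 1 := by rw [← map_mul, hw, map_one]
  have hσx := apply_eq_or_eq_inv_of_mul_self_ne_one hG hx σ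
  have hσxw := apply_eq_or_eq_inv_of_mul_self_ne_one hG hxw σ
  rw [map_mul] at hσxw
  rcases hσx with hσx | hσx <;> rcases hσxw with hσxw | hσxw <;> rw [hσx] at hσxw
  · exact .inl (mul_left_cancel hσxw)
  · -- here `σ w = x⁻² w`, and `x⁻² = x²` because `σ w` is an involution
    rw [eq_inv_iff_mul_eq_one] at hσxw
    right
    grind
  · rw [inv_mul_eq_iff_eq_mul] at hσxw
    exact .inr (by rw [hσxw, mul_assoc])
  · rw [mul_inv, mul_left_cancel_iff, ← eq_inv_iff_mul_eq_one.mpr hw] at hσxw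
    exact .inl hσxw

theorem mul_self_eq_one_of_ncard_orbit_eq_three
    (hG : ∀ g : G, (orbit (MulAut G) g).ncard ≤ 3) {w : G}
    (hw : (orbit (MulAut G) w).ncard = 3) (x : G) : x * x = 1 := by
  have hw2 : w * w = 1 := by
    by_contra hw2
    linarith [ncard_orbit_le_two_of_mul_self_ne_one hG hw2]
  by_contra hx
  have : (orbit (MulAut G) w).ncard ≤ 2 := Set.ncard_le_two_of_subset_pair <| by
    rintro _ ⟨σ, rfl⟩
    exact apply_eq_or_eq_mul_self_mul hG hw2 hx σ
  omega

end CommGroup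

theorem stmt_12 (G : Type*) [CommGroup G] [Finite G] (h : maol G = 3) :
    Nonempty (G ≃* Multiplicative (ZMod 2 × ZMod 2)) := by
  have hG : ∀ g : G, (orbit (MulAut G) g).ncard ≤ 3 := h ▸ ncard_orbit_le_maol
  obtain ⟨w, hw⟩ := exists_ncard_orbit_eq_maol (G := G)
  rw [h] at hw
  have hexp := mul_self_eq_one_of_ncard_orbit_eq_three hG hw
  have hw1 : w ≠ 1 := by
    rintro rfl
    simp [orbit_mulAut_one] at hw
  have hcard : Nat.card G = 4 := by
    rw [← Set.ncard_add_ncard_compl {1}, ← orbit_mulAut_eq_compl_one hexp hw1, hw,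
      Set.ncard_singleton]
  exact nonempty_mulEquiv_multiplicative_of_card_eq hexp _ (by simp [hcard])
end

section
/- Let G be a finite nonabelian group with maol(G) = 3. Then every automorphism of G has order 1, 2 or 3 (so in particular Aut(G) is solvable), and G is a {2,3}-group, i.e., the only primes dividing |G| are 2 and 3 (so in particular G is solvable). -/
open MulAction Subgroup

theorem Subgroup.eq_top_or_eq_top_of_forall_mem_or {G : Type*} [Group G] {H K : Subgroup G}
    (h : ∀ g, g ∈ H ∨ g ∈ K) : H = ⊤ ∨ K = ⊤ := by
  simp only [eq_top_iff']
  by_contra! ⟨⟨a, haH⟩, ⟨b, hbK⟩⟩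
  have haK : a ∈ K := (h a).resolve_left haH
  have hbH : b ∈ H := (h b).resolve_right hbK
  rcases h (a * b) with habH | habK
  · exact haH ((mul_mem_cancel_right hbH).mp habH)
  · exact hbK ((mul_mem_cancel_left haK).mp habK)

theorem MulAction.pow_two_smul_or_pow_three_smul {M α : Type*} [Group M] [MulAction M α] {a : α}
    [Finite (orbit M a)] (h : Nat.card (orbit M a) ≤ 3) (m : M) :
    m ^ 2 • a = a ∨ m ^ 3 • a = a := by
  have hsub : orbit (zpowers m) a ⊆ orbit M a := fun _ ⟨n, hn⟩ => ⟨n, hn⟩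
  have : Finite (orbit (zpowers m) a) := Set.Finite.subset (Set.toFinite _) hsub
  have : Fintype (orbit (zpowers m) a) := Fintype.ofFinite _
  have hle : period m a ≤ 3 := calc
    period m a = Nat.card (orbit (zpowers m) a) := by
      rw [Nat.card_eq_fintype_card, ← minimalPeriod_eq_card]; rfl
    _ ≤ Nat.card (orbit M a) := Nat.card_mono (Set.toFinite _) hsub
    _ ≤ 3 := h
  have hpos : 0 < period m a := (minimalPeriod_pos (a := m) (b := a)).pos
  simp only [pow_smul_eq_iff_period_dvd]
  interval_cases period m a <;> norm_num

theorem MulAut.pow_two_eq_one_or_pow_three_eq_one {G : Type*} [Group G] [Finite G]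
    (h : ∀ g : G, Nat.card (orbit (MulAut G) g) ≤ 3) (φ : MulAut G) :
    φ ^ 2 = 1 ∨ φ ^ 3 = 1 := by
  let fixedPts (ψ : MulAut G) : Subgroup G := ψ.toMonoidHom.eqLocus (MonoidHom.id G)
  have hfix := eq_top_or_eq_top_of_forall_mem_or (H := fixedPts (φ ^ 2)) (K := fixedPts (φ ^ 3))
    fun g => pow_two_smul_or_pow_three_smul (h g) φ
  refine hfix.imp (fun h => ?_) (fun h => ?_) <;> ext g <;> exact (eq_top_iff' _).mp h g

instance Group.isSolvable_pi {ι : Type*} [Finite ι] {H : ι → Type*} [∀ i, Group (H i)]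
    [h : ∀ i, Group.IsSolvable (H i)] : Group.IsSolvable (∀ i, H i) := by
  choose n hn using fun i => (h i).solvable
  obtain ⟨N, hN⟩ := (Set.finite_range n).bddAbove
  refine ⟨N, eq_bot_iff.mpr fun x hx => Subgroup.mem_bot.mpr <| funext fun i => ?_⟩
  have hxi : x i ∈ derivedSeries (H i) N :=
    map_derivedSeries_le_derivedSeries (Pi.evalMonoidHom H i) N ⟨x, hx, rfl⟩
  have hbot : derivedSeries (H i) N = ⊥ :=
    eq_bot_iff.mpr ((derivedSeries_antitone (H i) (hN ⟨i, rfl⟩)).trans (hn i).le)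
  rwa [hbot, Subgroup.mem_bot] at hxi

theorem Equiv.Perm.isSolvable_of_card_le_three {α : Type*} [Finite α] (h : Nat.card α ≤ 3) :
    Group.IsSolvable (Perm α) := by
  classical
  have := Fintype.ofFinite α
  have := alternatingGroup.isMulCommutative_of_card_le_three h
  have : Group.IsSolvable (alternatingGroup α) := Group.isSolvable_of_comm mul_comm'
  exact Group.isSolvable_of_ker_le_range (alternatingGroup α).subtype sign
    (by rw [range_subtype, alternatingGroup_eq_sign_ker])

theorem MulAction.isSolvable_of_card_orbit_le_three {M α : Type*} [Group M] [MulAction M α]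
    [FaithfulSMul M α] [Finite α] (h : ∀ a : α, Nat.card (orbit M a) ≤ 3) :
    Group.IsSolvable M := by
  have (a : α) : Group.IsSolvable (Equiv.Perm (orbit M a)) :=
    Equiv.Perm.isSolvable_of_card_le_three (h a)
  refine Group.isSolvable_of_isSolvable_injective
    (f := MonoidHom.pi fun a : α => toPermHom M (orbit M a))
    fun m n hmn => FaithfulSMul.eq_of_smul_eq_smul (α := α) fun a => ?_
  simpa using congr_arg (fun f => (f a ⟨a, mem_orbit_self a⟩ : α)) hmn

theorem mem_center_of_conj_eq_one {G : Type*} [Group G] {x : G} (hx : MulAut.conj x = 1) :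
    x ∈ center G :=
  mem_center_iff.mpr fun g => eq_mul_inv_iff_mul_eq.mp (congr_arg (· g) hx).symm

theorem isSolvable_of_isSolvable_mulAut {G : Type*} [Group G] [Group.IsSolvable (MulAut G)] :
    Group.IsSolvable G := by
  have : Group.IsSolvable (center G) := Group.isSolvable_of_comm mul_comm'
  exact Group.isSolvable_of_ker_le_range (center G).subtype MulAut.conj
    fun x hx => ⟨⟨x, mem_center_of_conj_eq_one hx⟩, rfl⟩

theorem mem_center_of_forall_mulAut_pow_eq_one {G : Type*} [Group G] {n : ℕ}
    (h : ∀ φ : MulAut G, φ ^ n = 1) {x : G} (hx : (orderOf x).Coprime n) : x ∈ center G :=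
  mem_center_of_conj_eq_one <| orderOf_eq_one_iff.mp <|
    (hx.coprime_dvd_left (orderOf_map_dvd _ x)).eq_one_of_dvd (orderOf_dvd_of_pow_eq_one (h _))

theorem exists_mulAut_eq_pow_of_le_center {G : Type*} [Group G] {N : Subgroup G}
    (hN : N ≤ center G) (hcop : (Nat.card N).Coprime N.index) {k : ℕ}
    (hk : (Nat.card N).Coprime k) : ∃ φ : MulAut G, ∀ x ∈ N, φ x = x ^ k := by
  have : N.Normal := ⟨fun x hx g => by rwa [mem_center_iff.mp (hN hx) g, mul_inv_cancel_right]⟩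
  obtain ⟨H, hH⟩ := exists_right_complement'_of_coprime hcop
  let e : N × H ≃* G := MulEquiv.ofBijective
    (MonoidHom.noncommCoprod N.subtype H.subtype fun n h => (mem_center_iff.mp (hN n.2) h).symm) hH
  let powHom : N →* N :=
    { toFun := (· ^ k)
      map_one' := one_pow k
      map_mul' := fun a b => Commute.mul_pow (Subtype.ext (mem_center_iff.mp (hN b.2) a)) k }
  let ψ : N ≃* N := MulEquiv.ofBijective powHom (powCoprime hk).bijective
  refine ⟨e.symm.trans ((ψ.prodCongr (MulEquiv.refl H)).trans e), fun x hx => ?_⟩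
  have : e.symm x = (⟨x, hx⟩, 1) := e.symm_apply_eq.mpr (mul_one x).symm
  rw [MulEquiv.trans_apply, this]
  exact mul_one _

theorem sub_one_le_card_orbit_mulAut {G : Type*} [Group G] [Finite G] {p : ℕ} [Fact p.Prime]
    (P : Sylow p G) (hP : (P : Subgroup G) ≤ center G) {x : G} (hx : x ∈ P)
    (hxp : orderOf x = p) :
    p - 1 ≤ Nat.card (orbit (MulAut G) x) := by
  have hsub : (x ^ ·) '' Set.Ico 1 p ⊆ orbit (MulAut G) x := by
    rintro _ ⟨k, ⟨hk1, hkp⟩, rfl⟩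
    have hk : (Nat.card (P : Subgroup G)).Coprime k := by
      rw [P.card_eq_multiplicity]
      exact Nat.Coprime.pow_left _ (Nat.coprime_of_lt_prime (by omega) hkp Fact.out)
    obtain ⟨φ, hφ⟩ := exists_mulAut_eq_pow_of_le_center hP P.card_coprime_index hk
    exact ⟨φ, hφ x hx⟩
  calc p - 1 = ((x ^ ·) '' Set.Ico 1 p).ncard := by
        rw [(pow_injOn_Iio_orderOf.mono (hxp ▸ Set.Ico_subset_Iio_self)).ncard_image,
          Set.ncard_Ico_nat]
    _ ≤ Nat.card (orbit (MulAut G) x) := by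
        rw [Nat.card_coe_set_eq]
        exact Set.ncard_le_ncard hsub (Set.toFinite _)

theorem eq_two_or_three_of_prime_dvd_card {G : Type*} [Group G] [Finite G]
    (h3 : ∀ g : G, Nat.card (orbit (MulAut G) g) ≤ 3) (h6 : ∀ φ : MulAut G, φ ^ 6 = 1)
    {p : ℕ} (hp : p.Prime) (hdvd : p ∣ Nat.card G) : p = 2 ∨ p = 3 := by
  have := Fact.mk hp
  by_contra! hp23
  have hp6 : p.Coprime (2 * 3) := Nat.Coprime.mul_right
    ((Nat.coprime_primes hp Nat.prime_two).mpr hp23.1)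
    ((Nat.coprime_primes hp Nat.prime_three).mpr hp23.2)
  obtain ⟨x, hx⟩ := exists_prime_orderOf_dvd_card' p hdvd
  obtain ⟨P, hxP⟩ := (IsPGroup.of_card (G := zpowers x) (n := 1)
    (by rw [Nat.card_zpowers, hx, pow_one])).exists_le_sylow
  have hPZ : (P : Subgroup G) ≤ center G := fun y hy =>
    mem_center_of_forall_mulAut_pow_eq_one h6 <| by
      simpa using P.isPGroup'.orderOf_coprime hp6 ⟨y, hy⟩
  have := (sub_one_le_card_orbit_mulAut P hPZ (hxP (mem_zpowers x)) hx).trans (h3 x)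
  have := hp.two_le
  have : p ≠ 4 := by rintro rfl; norm_num at hp
  omega

theorem stmt_13_general (G : Type*) [Group G] [Finite G]
    (h : maol G = 3) :
    (∀ φ : MulAut G, orderOf φ = 1 ∨ orderOf φ = 2 ∨ orderOf φ = 3) ∧
      IsSolvable (MulAut G) ∧
      (∀ p : ℕ, p.Prime → p ∣ Nat.card G → p = 2 ∨ p = 3) ∧
      IsSolvable G := by
  have h3 (g : G) : Nat.card (orbit (MulAut G) g) ≤ 3 :=
    (le_ciSup (f := fun g : G => Nat.card (orbit (MulAut G) g))
      (Set.finite_range _).bddAbove g).trans_eq h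
  have horder (φ : MulAut G) : orderOf φ ∣ 2 ∨ orderOf φ ∣ 3 :=
    (MulAut.pow_two_eq_one_or_pow_three_eq_one h3 φ).imp
      orderOf_dvd_of_pow_eq_one orderOf_dvd_of_pow_eq_one
  have h6 (φ : MulAut G) : φ ^ 6 = 1 := orderOf_dvd_iff_pow_eq_one.mp <|
    (horder φ).elim (·.trans (by norm_num)) (·.trans (by norm_num))
  have : Group.IsSolvable (MulAut G) := isSolvable_of_card_orbit_le_three h3
  refine ⟨fun φ => ?_, this, fun p hp hdvd => eq_two_or_three_of_prime_dvd_card h3 h6 hp hdvd,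
    isSolvable_of_isSolvable_mulAut⟩
  rcases horder φ with h | h
  · rcases (Nat.dvd_prime Nat.prime_two).mp h with h | h <;> simp [h]
  · rcases (Nat.dvd_prime Nat.prime_three).mp h with h | h <;> simp [h]

theorem stmt_13 (G : Type*) [Group G] [Finite G]
    (hna : ¬ ∀ a b : G, a * b = b * a) (h : maol G = 3) :
    (∀ φ : MulAut G, orderOf φ = 1 ∨ orderOf φ = 2 ∨ orderOf φ = 3) ∧
      IsSolvable (MulAut G) ∧
      (∀ p : ℕ, p.Prime → p ∣ Nat.card G → p = 2 ∨ p = 3) ∧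
      IsSolvable G :=
  stmt_13_general G h
end

section
/- Let G be a finite nonabelian group with maol(G) = 3. Then the set of orders of the inner automorphisms of G is exactly {1, 2, 3}; equivalently, the set of orders of the elements of the central quotient G/ζG is exactly {1, 2, 3}. -/
/-!
If all `Aut(G)`-orbits have at most three elements, every automorphism `α` satisfies
`α² x = x` or `α³ x = x` at each point. For inner automorphisms this covers `G` by the
centralizers of `g²` and `g³`; a group is not the union of two proper subgroups, so `g²` or `g³`
is central and the orders in `G/Z` lie in `{1, 2, 3}`. The orbit of a noncentral `x` is a union
of conjugacy classes of size at least two; having at most three elements, it is the class of `x`.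

If `G/Z` had exponent 2, noncentral classes would have size 2, so `α² = 1` for every
automorphism, while an orbit of size 3 forces an automorphism of order 3.

If `G/Z` had exponent 3, noncentral classes have size 3 and every `C(x)` is normal of index 3.
For such a subgroup `A`, `y ∉ A` and `w` central in `A` with `(y w)³ = y³`, the map
`a yⁿ ↦ a (y w)ⁿ` is an automorphism, and it must send `y` into its conjugacy class. Applied with
suitable `w` this shows in turn that `G` has class 2 with commutators of order 3, that elements
of order 3 are central, and that at most three central elements have order 3. Cubing is then a
homomorphism into `Z` with kernel of order at most 3, so `[G : Z] ≤ 3 = [G : C(x)]`, which puts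
`x` in the centre.
-/

open MulAction Subgroup Function
open scoped commutatorElement

theorem MulAction.minimalPeriod_le_card_orbit {H X : Type*} [Group H] [MulAction H X] [Finite X]
    (a : H) (x : X) : minimalPeriod (a • ·) x ≤ Nat.card (orbit H x) := by
  classical
  have := Fintype.ofFinite (orbit (zpowers a) x)
  rw [minimalPeriod_eq_card, ← Nat.card_eq_fintype_card, Nat.card_coe_set_eq, Nat.card_coe_set_eq]
  refine Set.ncard_le_ncard ?_ (Set.toFinite _)
  rintro _ ⟨h, rfl⟩
  exact ⟨h, rfl⟩

theorem Set.eq_or_eq_or_eq_of_ncard_eq_three {α : Type*} {s : Set α} (hs : s.ncard = 3)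
    {a b c d : α} (ha : a ∈ s) (hb : b ∈ s) (hc : c ∈ s) (hab : a ≠ b) (hac : a ≠ c)
    (hbc : b ≠ c) (hd : d ∈ s) : d = a ∨ d = b ∨ d = c := by
  have : ({a, b, c} : Set α) = s := Set.eq_of_subset_of_ncard_le
    (by simp [Set.insert_subset_iff, ha, hb, hc])
    (by rw [hs, Set.ncard_eq_three.mpr ⟨a, b, c, hab, hac, hbc, rfl⟩])
    (Set.finite_of_ncard_ne_zero (by omega))
  simpa [← this] using hd

section GroupTheory

variable {G : Type*} [Group G]

theorem Subgroup.commute_of_mem_center {z : G} (hz : z ∈ center G) (g : G) : Commute g z :=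
  mem_center_iff.mp hz g

theorem exists_not_commute_of_notMem_center {x : G} (hx : x ∉ center G) :
    ∃ y, ¬ Commute y x := by
  simpa [mem_center_iff, Commute, SemiconjBy] using hx

theorem Subgroup.commute_of_mem_inf_centralizer {A : Subgroup G} {a b : G}
    (ha : a ∈ A ⊓ centralizer (A : Set G)) (hb : b ∈ A ⊓ centralizer (A : Set G)) :
    Commute a b :=
  mem_centralizer_iff.mp (mem_inf.mp hb).2 a (mem_inf.mp ha).1

theorem self_mem_centralizer_inf_centralizer (x : G) :
    x ∈ centralizer {x} ⊓ centralizer (centralizer {x} : Set G) :=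
  mem_inf.mpr ⟨mem_centralizer_singleton_iff.mpr rfl,
    fun _ ha => mem_centralizer_singleton_iff.mp ha⟩

theorem MulAut.conj_apply_eq_self_of_mem_center {z : G} (hz : z ∈ center G) (y : G) :
    MulAut.conj y z = z := by
  rw [MulAut.conj_apply, (commute_of_mem_center hz y).eq, mul_inv_cancel_right]

theorem MulAut.conj_eq_one_of_mem_center {c : G} (hc : c ∈ center G) : MulAut.conj c = 1 := by
  ext g
  rw [MulAut.conj_apply, ← (commute_of_mem_center hc g).eq, mul_inv_cancel_right, MulAut.one_apply]

theorem orderOf_mk_dvd_iff {N : Subgroup G} [N.Normal] {g : G} {n : ℕ} :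
    orderOf (g : G ⧸ N) ∣ n ↔ g ^ n ∈ N := by
  rw [orderOf_dvd_iff_pow_eq_one, ← QuotientGroup.mk_pow, QuotientGroup.eq_one_iff]

theorem mem_orbit_conjAct_iff {x y : G} : y ∈ orbit (ConjAct G) x ↔ ∃ g : G, g * x * g⁻¹ = y := by
  rw [ConjAct.mem_orbit_conjAct, isConj_comm, isConj_iff]

theorem card_orbit_conjAct (x : G) : Nat.card (orbit (ConjAct G) x) = (centralizer {x}).index := by
  rw [Nat.card_coe_set_eq, ← index_stabilizer, centralizer_eq_comap_stabilizer]
  exact (index_comap_of_surjective _ ConjAct.toConjAct.surjective).symm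

theorem orbit_conjAct_subset_orbit_mulAut (x : G) : orbit (ConjAct G) x ⊆ orbit (MulAut G) x := by
  intro y hy
  obtain ⟨g, rfl⟩ := mem_orbit_conjAct_iff.mp hy
  exact ⟨MulAut.conj g, rfl⟩

theorem Subgroup.normal_of_le_of_index_eq_minFac {N H : Subgroup G} [N.Normal] (hNH : N ≤ H)
    (hH : H.index = N.index.minFac) : H.Normal := by
  have hmap : (H.map (QuotientGroup.mk' N)).index = (Nat.card (G ⧸ N)).minFac := by
    rw [index_map_eq _ (QuotientGroup.mk'_surjective N) (by rwa [QuotientGroup.ker_mk']), hH]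
    rfl
  rw [← comap_map_eq_self (f := QuotientGroup.mk' N) (H := H) (by rwa [QuotientGroup.ker_mk'])]
  exact (normal_of_index_eq_minFac_card hmap).comap _

theorem Subgroup.eq_top_of_le_of_not_le {A H : Subgroup G} (hA : A.index.Prime) (hAH : A ≤ H)
    (hHA : ¬ H ≤ A) : H = ⊤ := by
  have hrel := relIndex_mul_index hAH
  rcases hA.eq_one_or_self_of_dvd _ (index_dvd_of_le hAH) with h | h
  · exact index_eq_one.mp h
  · rw [h] at hrel
    exact absurd (relIndex_eq_one.mp (by simpa [hA.pos.ne'] using hrel)) hHA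

theorem Subgroup.mem_center_of_mem_centralizer_of_commute {A : Subgroup G} (hA : A.index.Prime)
    {c y : G} (hc : c ∈ centralizer (A : Set G)) (hy : y ∉ A) (hcy : Commute c y) :
    c ∈ center G := by
  have htop : centralizer {c} = ⊤ :=
    eq_top_of_le_of_not_le hA (fun a ha => mem_centralizer_singleton_iff.mpr
      (mem_centralizer_iff.mp hc a ha))
      (fun h => hy (h (mem_centralizer_singleton_iff.mpr hcy.eq.symm)))
  simpa using centralizer_eq_top_iff_subset.mp htop

variable [Finite G]

theorem dvd_of_prime_dvd_index_center {n p : ℕ} (hn : ∀ g : G, g ^ n ∈ center G)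
    (hp : p.Prime) (hpZ : p ∣ (center G).index) : p ∣ n := by
  have : Fact p.Prime := ⟨hp⟩
  obtain ⟨q, hq⟩ := exists_prime_orderOf_dvd_card' (G := G ⧸ center G) p hpZ
  obtain ⟨g, rfl⟩ := QuotientGroup.mk_surjective q
  exact hq ▸ orderOf_mk_dvd_iff.mpr (hn g)

theorem two_le_index_centralizer {x : G} (hx : x ∉ center G) : 2 ≤ (centralizer {x}).index := by
  have h0 : (centralizer {x}).index ≠ 0 := index_ne_zero_of_finite
  have h1 : (centralizer {x}).index ≠ 1 := by
    rw [Ne, index_eq_one, centralizer_eq_top_iff_subset, Set.singleton_subset_iff]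
    exact hx
  omega

end GroupTheory

section Construction

variable {G : Type*} [Group G]

theorem conj_eq_conj_of_mem_centralizer {A : Subgroup G} [A.Normal] {k : G}
    (hk : k ∈ centralizer (A : Set G)) {g h : G} (hgh : (g : G ⧸ A) = h) :
    h⁻¹ * k * h = g⁻¹ * k * g := by
  obtain ⟨a, ha, rfl⟩ : ∃ a ∈ A, h = g * a := ⟨g⁻¹ * h, QuotientGroup.eq.mp hgh, by group⟩
  have hk' : g⁻¹ * k * g ∈ centralizer (A : Set G) := by
    simpa using (normal_centralizer (H := A)).conj_mem _ hk g⁻¹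
  have := mem_centralizer_iff.mp hk' a ha
  calc (g * a)⁻¹ * k * (g * a) = a⁻¹ * ((g⁻¹ * k * g) * a) := by group
    _ = g⁻¹ * k * g := by rw [← this]; group

def twist (y w : G) (n : ℕ) : G := (y ^ n)⁻¹ * (y * w) ^ n

theorem twist_add (y w : G) (m n : ℕ) :
    twist y w (m + n) = (y ^ n)⁻¹ * twist y w m * y ^ n * twist y w n := by
  simp only [twist, pow_add]; group

@[simp] theorem twist_zero (y w : G) : twist y w 0 = 1 := by simp [twist]

@[simp] theorem twist_one (y w : G) : twist y w 1 = w := by simp [twist]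

theorem twist_mem {K : Subgroup G} [K.Normal] (y : G) {w : G} (hw : w ∈ K) (n : ℕ) :
    twist y w n ∈ K := by
  induction n with
  | zero => simp
  | succ n ih =>
    rw [twist_add, pow_one, twist_one]
    exact mul_mem (by simpa using ‹K.Normal›.conj_mem _ ih y⁻¹) hw

theorem twist_periodic {A : Subgroup G} [A.Normal] {p : ℕ} {y w : G}
    (hw : w ∈ centralizer (A : Set G)) (hyp : y ^ p ∈ A) (hyw : (y * w) ^ p = y ^ p) :
    Periodic (twist y w) p := by
  intro n
  have hcomm := mem_centralizer_iff.mp (twist_mem y hw n) _ hyp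
  have hp : twist y w p = 1 := by simp [twist, hyw]
  rw [twist_add, hp, mul_one, mul_assoc, ← hcomm, inv_mul_cancel_left]

variable [Finite G]

/-- The automorphism is `a * y ^ n ↦ a * (y * w) ^ n` for `a ∈ A`, i.e. `g ↦ g * twist y w n`
on the coset `A * y ^ n`; `(y * w) ^ p = y ^ p` makes this independent of `n` modulo `p`. -/
theorem exists_mulAut_apply_eq_mul {A : Subgroup G} [A.Normal] {p : ℕ} (hp : p.Prime)
    (hA : A.index = p) {y w : G} (hy : y ∉ A) (hw : w ∈ A ⊓ centralizer (A : Set G))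
    (hyw : (y * w) ^ p = y ^ p) : ∃ α : MulAut G, α y = y * w := by
  have : Fact p.Prime := ⟨hp⟩
  have hy_order : orderOf (y : G ⧸ A) = p := by
    refine orderOf_eq_prime ?_ (by simpa [QuotientGroup.eq_one_iff] using hy)
    rw [← hA]; exact pow_card_eq_one'
  have hyp : y ^ p ∈ A := by
    rw [← QuotientGroup.eq_one_iff, QuotientGroup.mk_pow, ← hy_order, pow_orderOf_eq_one]
  have hT := twist_periodic (mem_inf.mp hw).2 hyp hyw
  have twist_congr : ∀ {a b : ℕ}, (y : G ⧸ A) ^ a = (y : G ⧸ A) ^ b →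
      twist y w a = twist y w b := by
    intro a b hab
    rw [pow_eq_pow_iff_modEq, hy_order] at hab
    rw [← hT.map_mod_nat a, ← hT.map_mod_nat b, hab]
  have hgen : ∀ g : G, ∃ n : ℕ, (y : G ⧸ A) ^ n = g := by
    intro g
    have htop : zpowers (y : G ⧸ A) = ⊤ :=
      eq_top_of_card_eq _ (by rw [Nat.card_zpowers, hy_order, ← hA]; rfl)
    exact mem_powers_iff_mem_zpowers.mpr (htop ▸ mem_top (g : G ⧸ A))
  choose n hn using hgen
  have twist_n_mul : ∀ g h,
      twist y w (n (g * h)) = h⁻¹ * twist y w (n g) * h * twist y w (n h) := by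
    intro g h
    rw [twist_congr (b := n g + n h) (by rw [hn, pow_add, hn, hn]; rfl), twist_add,
      conj_eq_conj_of_mem_centralizer (mem_inf.mp (twist_mem y hw _)).2 (g := y ^ n h) (h := h)
        (by rw [QuotientGroup.mk_pow, hn])]
  let f : G →* G := MonoidHom.mk' (fun g => g * twist y w (n g)) (by
    intro g h; simp only [twist_n_mul]; group)
  have hf : Injective f := by
    rw [injective_iff_map_eq_one]
    intro g hg
    have hgA : (g : G ⧸ A) = (y : G ⧸ A) ^ 0 := by
      rw [pow_zero, QuotientGroup.eq_one_iff, eq_inv_of_mul_eq_one_left hg]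
      exact inv_mem (mem_inf.mp (twist_mem y hw _)).1
    have : twist y w (n g) = 1 := by rw [twist_congr (b := 0) (by rw [hn, hgA]), twist_zero]
    simpa [f, this] using hg
  refine ⟨MulEquiv.ofBijective f (Finite.injective_iff_bijective.mp hf), ?_⟩
  show y * twist y w (n y) = y * w
  rw [twist_congr (b := 1) (by rw [hn, pow_one]), twist_one]

end Construction

section Maol

variable {G : Type*} [Group G] [Finite G]

theorem card_orbit_le_maol (x : G) : Nat.card (orbit (MulAut G) x) ≤ maol G :=
  le_ciSup (f := fun g : G => Nat.card (orbit (MulAut G) g)) (Set.finite_range _).bddAbove x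

theorem exists_card_orbit_eq_maol : ∃ x : G, Nat.card (orbit (MulAut G) x) = maol G := by
  obtain ⟨x, hx⟩ := Finite.exists_max fun g : G => Nat.card (orbit (MulAut G) g)
  exact ⟨x, le_antisymm (card_orbit_le_maol x) (ciSup_le hx)⟩

variable (hm : maol G = 3)
include hm

theorem pow_two_apply_eq_or_pow_three_apply_eq (α : MulAut G) (x : G) :
    (α ^ 2) x = x ∨ (α ^ 3) x = x := by
  have hle := (minimalPeriod_le_card_orbit α x).trans (hm ▸ card_orbit_le_maol x)
  have hpos := (minimalPeriod_pos (a := α) (b := x)).out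
  simp only [← MulAut.smul_def, pow_smul_eq_iff_minimalPeriod_dvd]
  interval_cases minimalPeriod (α • ·) x <;> omega

theorem pow_two_mem_center_or_pow_three_mem_center (g : G) :
    g ^ 2 ∈ center G ∨ g ^ 3 ∈ center G := by
  have hcover : ((⊤ : Subgroup G) : Set G) ⊆ centralizer {g ^ 2} ∪ centralizer {g ^ 3} := by
    intro x _
    simp only [Set.mem_union, SetLike.mem_coe, mem_centralizer_singleton_iff]
    refine (pow_two_apply_eq_or_pow_three_apply_eq hm (MulAut.conj g) x).imp ?_ ?_ <;>
    · rw [← map_pow, MulAut.conj_apply, mul_inv_eq_iff_eq_mul]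
      exact Eq.symm
  simpa only [top_le_iff, centralizer_eq_top_iff_subset, Set.singleton_subset_iff,
    SetLike.mem_coe] using SubgroupClass.subset_union.mp hcover

theorem orbit_mulAut_eq_orbit_conjAct {x : G} (hx : x ∉ center G) :
    orbit (MulAut G) x = orbit (ConjAct G) x := by
  refine Set.Subset.antisymm ?_ (orbit_conjAct_subset_orbit_mulAut x)
  rintro _ ⟨β, rfl⟩
  by_contra hβ
  change β x ∉ _ at hβ
  set C := orbit (ConjAct G) x
  have hdisj : Disjoint C (β '' C) := by
    rw [Set.disjoint_right]
    rintro _ ⟨c, hc, rfl⟩ hβc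
    obtain ⟨g, rfl⟩ := mem_orbit_conjAct_iff.mp hc
    obtain ⟨h, hh⟩ := mem_orbit_conjAct_iff.mp hβc
    refine hβ (mem_orbit_conjAct_iff.mpr ⟨(β g)⁻¹ * h, ?_⟩)
    rw [map_mul, map_mul, map_inv] at hh
    rw [show (β g)⁻¹ * h * x * ((β g)⁻¹ * h)⁻¹ = (β g)⁻¹ * (h * x * h⁻¹) * β g by group, hh]
    group
  have hsub : C ∪ β '' C ⊆ orbit (MulAut G) x := by
    rintro _ (hc | ⟨c, hc, rfl⟩)
    · exact orbit_conjAct_subset_orbit_mulAut x hc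
    · obtain ⟨γ, rfl⟩ := orbit_conjAct_subset_orbit_mulAut x hc
      exact ⟨β * γ, mul_smul β γ x⟩
  have hC : 2 ≤ C.ncard := by
    rw [← Nat.card_coe_set_eq, card_orbit_conjAct]; exact two_le_index_centralizer hx
  have := Set.ncard_le_ncard hsub (Set.toFinite _)
  rw [Set.ncard_union_eq hdisj (Set.toFinite _) (Set.toFinite _),
    Set.ncard_image_of_injective _ β.injective] at this
  have := hm ▸ card_orbit_le_maol (G := G) x
  rw [Nat.card_coe_set_eq] at this
  omega

end Maol

section ExponentTwo

variable {G : Type*} [Group G] [Finite G] (hm : maol G = 3) (hsq : ∀ g : G, g ^ 2 ∈ center G)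
include hm hsq

theorem pow_two_apply_eq_of_notMem_center {x : G} (hx : x ∉ center G) (α : MulAut G) :
    (α ^ 2) x = x := by
  have hcard : Nat.card (orbit (MulAut G) x) = (centralizer {x}).index := by
    rw [orbit_mulAut_eq_orbit_conjAct hm hx, card_orbit_conjAct]
  have h3 : (centralizer {x}).index ≠ 3 := fun h => by
    have := dvd_of_prime_dvd_index_center hsq Nat.prime_three
      (h ▸ index_dvd_of_le (center_le_centralizer {x}))
    omega
  have hcard_le := hm ▸ hcard ▸ card_orbit_le_maol (G := G) x
  have hle : minimalPeriod (α • ·) x ≤ 2 := by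
    have := hcard ▸ minimalPeriod_le_card_orbit α x
    omega
  have hpos := (minimalPeriod_pos (a := α) (b := x)).out
  rw [← MulAut.smul_def, pow_smul_eq_iff_minimalPeriod_dvd]
  interval_cases minimalPeriod (α • ·) x <;> omega

theorem pow_two_eq_one_of_notMem_center {a : G} (ha : a ∉ center G) (α : MulAut G) :
    α ^ 2 = 1 := by
  ext g
  by_cases hg : g ∈ center G
  · have hag : a * g ∉ center G := fun h => ha (by simpa using mul_mem h (inv_mem hg))
    have := pow_two_apply_eq_of_notMem_center hm hsq hag α
    rwa [map_mul, pow_two_apply_eq_of_notMem_center hm hsq ha, mul_right_inj] at this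
  · exact pow_two_apply_eq_of_notMem_center hm hsq hg α

theorem center_eq_top_of_forall_pow_two_mem_center : center G = ⊤ := by
  rw [eq_top_iff']
  by_contra! ⟨a, ha⟩
  obtain ⟨x, hx⟩ := exists_card_orbit_eq_maol (G := G)
  have h3 : 3 ∣ Nat.card (MulAut G) := by
    rw [← hm, ← hx, Nat.card_coe_set_eq, ← index_stabilizer]
    exact index_dvd_card _
  have : Fact (Nat.Prime 3) := ⟨Nat.prime_three⟩
  obtain ⟨α, hα⟩ := exists_prime_orderOf_dvd_card' 3 h3
  have := hα ▸ orderOf_dvd_of_pow_eq_one (pow_two_eq_one_of_notMem_center hm hsq ha α)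
  omega

end ExponentTwo

section ExponentThree

variable {G : Type*} [Group G] [Finite G] (hm : maol G = 3) (hcube : ∀ g : G, g ^ 3 ∈ center G)
include hm hcube

theorem index_centralizer_eq_three {x : G} (hx : x ∉ center G) : (centralizer {x}).index = 3 := by
  have h2 := two_le_index_centralizer hx
  have h3 : (centralizer {x}).index ≤ 3 := by
    rw [← card_orbit_conjAct, ← hm, ← orbit_mulAut_eq_orbit_conjAct hm hx]
    exact card_orbit_le_maol x
  have hne : (centralizer {x}).index ≠ 2 := fun h => by
    have := dvd_of_prime_dvd_index_center hcube Nat.prime_two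
      (h ▸ index_dvd_of_le (center_le_centralizer {x}))
    omega
  omega

omit hm in
theorem minFac_index_center {x : G} (hx : x ∉ center G) : (center G).index.minFac = 3 := by
  have h1 : (center G).index ≠ 1 := fun h => hx (index_eq_one.mp h ▸ mem_top x)
  have hp := Nat.minFac_prime h1
  exact (Nat.prime_dvd_prime_iff_eq hp Nat.prime_three).mp
    (dvd_of_prime_dvd_index_center hcube hp (Nat.minFac_dvd _))

theorem normal_centralizer_singleton {x : G} (hx : x ∉ center G) : (centralizer {x}).Normal :=
  normal_of_le_of_index_eq_minFac (center_le_centralizer _)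
    (by rw [index_centralizer_eq_three hm hcube hx, minFac_index_center hcube hx])

theorem card_orbit_conjAct_eq_three {x : G} (hx : x ∉ center G) :
    (orbit (ConjAct G) x).ncard = 3 := by
  rw [← Nat.card_coe_set_eq, card_orbit_conjAct, index_centralizer_eq_three hm hcube hx]

theorem mul_mem_orbit_conjAct {x t : G} (hx : x ∉ center G) (ht : t ∈ center G)
    (ht3 : t ^ 3 = 1) : x * t ∈ orbit (ConjAct G) x := by
  obtain ⟨y, hyx⟩ := exists_not_commute_of_notMem_center hx
  have hy : y ∉ center G := fun h => hyx (commute_of_mem_center h x).symm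
  have := normal_centralizer_singleton hm hcube hy
  obtain ⟨α, hα⟩ := exists_mulAut_apply_eq_mul Nat.prime_three
    (index_centralizer_eq_three hm hcube hy)
    (fun h => hyx (mem_centralizer_singleton_iff.mp h).symm)
    (mem_inf.mpr ⟨center_le_centralizer _ ht, center_le_centralizer _ ht⟩)
    (by rw [(commute_of_mem_center ht x).mul_pow, ht3, mul_one])
  rw [← orbit_mulAut_eq_orbit_conjAct hm hx, ← hα]
  exact ⟨α, rfl⟩

/-- Write `σ` for conjugation by `y`. Since `C(x)` is normal, `x`, `σ x`, `σ² x` lie in the abelian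
normal subgroup `C(x) ∩ C(C(x))`; their product is fixed by `σ` (as `σ³ = 1`), hence central, and
`δ = x⁻³ · x · σ x · σ² x` works because `(σ x)³ = x³`. -/
theorem exists_mem_center_conj_commutator_eq {x y : G} (hxy : ¬ Commute x y) :
    ⁅x⁻¹, y⁆ ∈ centralizer (centralizer {x} : Set G) ∧
      ∃ δ ∈ center G, δ ^ 3 = 1 ∧ MulAut.conj y ⁅x⁻¹, y⁆ = ⁅x⁻¹, y⁆ * δ := by
  have hx : x ∉ center G := fun h => hxy (commute_of_mem_center h y).symm
  have := normal_centralizer_singleton hm hcube hx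
  have hA : (centralizer {x}).index.Prime := by
    rw [index_centralizer_eq_three hm hcube hx]; exact Nat.prime_three
  have hy : y ∉ centralizer {x} := fun h => hxy (mem_centralizer_singleton_iff.mp h).symm
  set K := centralizer {x} ⊓ centralizer (centralizer {x} : Set G)
  have hK : K.Normal := inferInstance
  set σ := MulAut.conj y
  have hxK : x ∈ K := self_mem_centralizer_inf_centralizer x
  have huK : σ x ∈ K := hK.conj_mem x hxK y
  have hvK : σ (σ x) ∈ K := hK.conj_mem _ huK y
  have hxu := commute_of_mem_inf_centralizer hxK huK
  have hxv := commute_of_mem_inf_centralizer hxK hvK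
  have huv := commute_of_mem_inf_centralizer huK hvK
  have hPc : x * σ x * σ (σ x) ∈ center G := by
    refine mem_center_of_mem_centralizer_of_commute hA
      (mem_inf.mp (mul_mem (mul_mem hxK huK) hvK)).2 hy ?_
    have hσ3 : σ (σ (σ x)) = x := by
      rw [← MulAut.mul_apply, ← MulAut.mul_apply, ← pow_three', ← map_pow,
        MulAut.conj_eq_one_of_mem_center (hcube y), MulAut.one_apply]
    have hσP : σ (x * σ x * σ (σ x)) = x * σ x * σ (σ x) := by
      rw [map_mul, map_mul, hσ3, ← (hxu.mul_right hxv).eq, mul_assoc]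
    rw [MulAut.conj_apply, mul_inv_eq_iff_eq_mul] at hσP
    exact hσP.symm
  have hu3 : σ x ^ 3 = x ^ 3 := by rw [← map_pow, MulAut.conj_apply_eq_self_of_mem_center (hcube x)]
  have hv3 : σ (σ x) ^ 3 = x ^ 3 := by
    rw [← map_pow, hu3, MulAut.conj_apply_eq_self_of_mem_center (hcube x)]
  have hz : ⁅x⁻¹, y⁆ = x⁻¹ * σ x := by
    simp only [commutatorElement_def, inv_inv, σ, MulAut.conj_apply, mul_assoc]
  refine ⟨hz ▸ (mem_inf.mp (mul_mem (inv_mem hxK) huK)).2,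
    (x ^ 3)⁻¹ * (x * σ x * σ (σ x)), mul_mem (inv_mem (hcube x)) hPc, ?_, ?_⟩
  · rw [(commute_of_mem_center hPc _).mul_pow, (hxv.mul_left huv).mul_pow, hxu.mul_pow, hu3, hv3,
      inv_pow]
    group
  · have hW : Commute x⁻¹ (σ x * (σ x ^ 3)⁻¹) :=
      (hxu.mul_right (hxu.pow_right 3).inv_right).inv_left
    rw [hz, map_mul, map_inv]
    calc (σ x)⁻¹ * σ (σ x) = (σ x * (σ x ^ 3)⁻¹) * σ x * σ (σ x) := by group
      _ = (x⁻¹ * (σ x * (σ x ^ 3)⁻¹) * x) * σ x * σ (σ x) := by rw [hW.eq]; group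
      _ = x⁻¹ * σ x * ((x ^ 3)⁻¹ * (x * σ x * σ (σ x))) := by rw [← hu3]; group

/-- If `δ = 1`, the commutator commutes with `y` and with `C(x)`. Otherwise `x`, `x δ`, `x δ²` are
the three conjugates of `x`, and `y x y⁻¹ = x ⁅x⁻¹, y⁆` is one of them. -/
theorem commutator_inv_left_mem_center {x y : G} (hxy : ¬ Commute x y) :
    ⁅x⁻¹, y⁆ ∈ center G := by
  have hx : x ∉ center G := fun h => hxy (commute_of_mem_center h y).symm
  obtain ⟨hzA, δ, hδ, hδ3, hσz⟩ := exists_mem_center_conj_commutator_eq hm hcube hxy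
  by_cases hδ1 : δ = 1
  · refine mem_center_of_mem_centralizer_of_commute (A := centralizer {x})
      (by rw [index_centralizer_eq_three hm hcube hx]; exact Nat.prime_three) hzA
      (fun h => hxy (mem_centralizer_singleton_iff.mp h).symm) ?_
    rw [hδ1, mul_one, MulAut.conj_apply, mul_inv_eq_iff_eq_mul] at hσz
    exact hσz.symm
  have hδ2 : δ ^ 2 ≠ 1 := fun h => hδ1 (by rwa [pow_succ, h, one_mul] at hδ3)
  have hu : x * ⁅x⁻¹, y⁆ ∈ orbit (ConjAct G) x :=
    mem_orbit_conjAct_iff.mpr ⟨y, by simp [commutatorElement_def, mul_assoc]⟩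
  rcases Set.eq_or_eq_or_eq_of_ncard_eq_three (card_orbit_conjAct_eq_three hm hcube hx)
    (mem_orbit_self x) (mul_mem_orbit_conjAct hm hcube hx hδ hδ3)
    (mul_mem_orbit_conjAct hm hcube hx (pow_mem hδ 2)
      (by rw [← pow_mul, mul_comm, pow_mul, hδ3, one_pow]))
    (by simpa [eq_comm] using hδ1) (by simpa [eq_comm] using hδ2)
    (by simpa [pow_two, eq_comm] using hδ1) hu with h | h | h
  · rw [mul_eq_left.mp h]; exact one_mem _
  · rw [mul_left_cancel h]; exact hδ
  · rw [mul_left_cancel h]; exact pow_mem hδ 2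

theorem commutator_mem_center (x y : G) : ⁅x, y⁆ ∈ center G := by
  by_cases hxy : Commute x y
  · rw [commutatorElement_eq_one_iff_commute.mpr hxy]; exact one_mem _
  · simpa using commutator_inv_left_mem_center hm hcube (Commute.inv_left_iff.not.mpr hxy)

theorem commutator_pow_three (x y : G) : ⁅x, y⁆ ^ 3 = 1 := by
  have hc := commutator_mem_center hm hcube x y
  have hconj : MulAut.conj x y = ⁅x, y⁆ * y := by
    rw [MulAut.conj_apply, commutatorElement_def]; group
  have h := MulAut.conj_apply_eq_self_of_mem_center (hcube y) x
  rw [map_pow, hconj, (commute_of_mem_center hc y).symm.mul_pow] at h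
  exact mul_eq_right.mp h

theorem mul_pow_three (g h : G) : (g * h) ^ 3 = g ^ 3 * h ^ 3 := by
  obtain ⟨c, hc_def⟩ : ∃ c, c = ⁅h⁻¹, g⁻¹⁆ := ⟨_, rfl⟩
  have hc : ∀ a, Commute a c :=
    hc_def ▸ commute_of_mem_center (commutator_mem_center hm hcube _ _)
  have hτ : MulAut.conj g⁻¹ h = h * c := by
    rw [MulAut.conj_apply, hc_def, commutatorElement_def]; group
  have hτc : MulAut.conj g⁻¹ c = c := by
    rw [MulAut.conj_apply, (hc g⁻¹).eq, mul_inv_cancel_right]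
  calc (g * h) ^ 3
      = g ^ 3 * (MulAut.conj g⁻¹ (MulAut.conj g⁻¹ h) * MulAut.conj g⁻¹ h * h) := by
        simp only [MulAut.conj_apply, pow_three]; group
    _ = g ^ 3 * (h * (h * (h * (c * (c * c))))) := by
        rw [hτ, map_mul, hτ, hτc]
        simp only [mul_assoc, (hc h).symm.left_comm, (hc h).symm.eq]
    _ = g ^ 3 * h ^ 3 := by
        rw [← pow_three, hc_def, commutator_pow_three hm hcube, mul_one, ← pow_three]

/-- A noncentral `w` would give an automorphism `y ↦ y w` with `y ∉ C(w)`, making `w` a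
commutator `⁅y⁻¹, g⁆`. -/
theorem mem_center_of_pow_three_eq_one {w : G} (hw : w ^ 3 = 1) : w ∈ center G := by
  by_contra hwZ
  obtain ⟨y, hyw⟩ := exists_not_commute_of_notMem_center hwZ
  have := normal_centralizer_singleton hm hcube hwZ
  obtain ⟨α, hα⟩ := exists_mulAut_apply_eq_mul Nat.prime_three
    (index_centralizer_eq_three hm hcube hwZ) (fun h => hyw (mem_centralizer_singleton_iff.mp h))
    (self_mem_centralizer_inf_centralizer w) (by rw [mul_pow_three hm hcube, hw, mul_one])
  have hy : y ∉ center G := fun h => hyw (commute_of_mem_center h w).symm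
  obtain ⟨g, hg⟩ := mem_orbit_conjAct_iff.mp
    (orbit_mulAut_eq_orbit_conjAct hm hy ▸ ⟨α, hα⟩ : y * w ∈ orbit (ConjAct G) y)
  have hw_eq : w = ⁅y⁻¹, g⁆ := by
    rw [commutatorElement_def, inv_inv, mul_assoc, mul_assoc, ← mul_assoc g, hg]; group
  exact hwZ (hw_eq ▸ commutator_mem_center hm hcube _ _)

theorem center_eq_top_of_forall_pow_three_mem_center : center G = ⊤ := by
  rw [eq_top_iff']
  by_contra! ⟨a, ha⟩
  let cube : G →* G := MonoidHom.mk' (· ^ 3) (mul_pow_three hm hcube)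
  have hker : Nat.card cube.ker ≤ 3 := by
    rw [← card_orbit_conjAct_eq_three hm hcube ha, ← Nat.card_coe_set_eq]
    refine Nat.card_le_card_of_injective
      (fun t => ⟨a * t, mul_mem_orbit_conjAct hm hcube ha
        (mem_center_of_pow_three_eq_one hm hcube t.2) t.2⟩) fun s t hst => ?_
    exact Subtype.ext (mul_left_cancel (congrArg Subtype.val hst))
  have hrange : Nat.card cube.range ≤ Nat.card (center G) :=
    card_le_of_le (by rintro _ ⟨g, rfl⟩; exact hcube g)
  have hZ : (center G).index ≤ 3 := by
    have h1 := card_mul_index cube.ker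
    have h2 := card_mul_index (center G)
    rw [index_ker] at h1
    have hpos : 0 < Nat.card (center G) := Nat.card_pos
    nlinarith
  have hrel := relIndex_mul_index (center_le_centralizer {a})
  rw [index_centralizer_eq_three hm hcube ha] at hrel
  have hrel1 : (center G).relIndex (centralizer {a}) = 1 := by
    have : (center G).index ≠ 0 := index_ne_zero_of_finite
    omega
  exact ha (relIndex_eq_one.mp hrel1 (mem_centralizer_singleton_iff.mpr rfl))

end ExponentThree

section OrdersInCentralQuotient

variable {G : Type*} [Group G] [Finite G] (hm : maol G = 3)
include hm

theorem orderOf_eq_one_or_two_or_three (q : G ⧸ center G) :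
    orderOf q = 1 ∨ orderOf q = 2 ∨ orderOf q = 3 := by
  obtain ⟨g, rfl⟩ := QuotientGroup.mk_surjective q
  rcases pow_two_mem_center_or_pow_three_mem_center hm g with h | h
  · rcases Nat.prime_two.eq_one_or_self_of_dvd _ (orderOf_mk_dvd_iff.mpr h) with h | h <;> simp [h]
  · rcases Nat.prime_three.eq_one_or_self_of_dvd _ (orderOf_mk_dvd_iff.mpr h) with h | h <;>
      simp [h]

theorem exists_orderOf_eq_two (hZ : center G ≠ ⊤) : ∃ q : G ⧸ center G, orderOf q = 2 := by
  by_contra! h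
  refine hZ (center_eq_top_of_forall_pow_three_mem_center hm fun g => orderOf_mk_dvd_iff.mp ?_)
  rcases orderOf_eq_one_or_two_or_three hm (g : G ⧸ center G) with h1 | h2 | h3
  · simp [h1]
  · exact absurd h2 (h _)
  · rw [h3]

theorem exists_orderOf_eq_three (hZ : center G ≠ ⊤) : ∃ q : G ⧸ center G, orderOf q = 3 := by
  by_contra! h
  refine hZ (center_eq_top_of_forall_pow_two_mem_center hm fun g => orderOf_mk_dvd_iff.mp ?_)
  rcases orderOf_eq_one_or_two_or_three hm (g : G ⧸ center G) with h1 | h2 | h3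
  · simp [h1]
  · rw [h2]
  · exact absurd h3 (h _)

end OrdersInCentralQuotient

theorem stmt_14 (G : Type*) [Group G] [Finite G]
    (hna : ¬ ∀ a b : G, a * b = b * a) (h : maol G = 3) :
    (Set.range fun x : G ⧸ Subgroup.center G => orderOf x) = ({1, 2, 3} : Set ℕ) := by
  have hZ : center G ≠ ⊤ := fun hZ => hna fun a b => mem_center_iff.mp (hZ ▸ mem_top b) a
  ext n
  constructor
  · rintro ⟨q, rfl⟩
    exact orderOf_eq_one_or_two_or_three h q
  · rintro (rfl | rfl | rfl)
    · exact ⟨1, orderOf_one⟩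
    · exact exists_orderOf_eq_two h hZ
    · exact exists_orderOf_eq_three h hZ
end
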